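/- Let f = Σ_{i≥0} a_i x^i ∈ K⦃x⦄ be SP. (1) If there exists d ∈ O_K with f(d) = 0, then |f(x)| = |f|_SP · |x − d| for all x ∈ O_K. (2) If no such d exists, then |f(x)| = |a_0| > |f|_SP for all x ∈ O_K. (3) In general, if e ∈ O_K is such that |f(e)| is minimal among the values |f(x)| for x ∈ O_K, then |f(x)| ≥ |f|_SP · |x − e| for all x ∈ O_K. -/

import Mathlib

open MeasureTheory Filter
open scoped NNReal ENNReal Classical

namespace VdC

variable {K : Type*} [NontriviallyNormedField K]

/-! ### One-variable convergent power series over a non-archimedean local field -/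

/-- Evaluation of a one-variable power series (given by its coefficients) at a point. -/
noncomputable def pseval (a : ℕ → K) (x : K) : K := ∑' i, a i * x ^ i

/-- Membership in `K⦃x⦄`: the coefficients tend to `0`, i.e. convergence on `O_K`. -/
def IsConvergent (a : ℕ → K) : Prop := Tendsto (fun i => ‖a i‖) atTop (nhds 0)

/-- Gauss norm of a power series. -/
noncomputable def gaussNorm (a : ℕ → K) : ℝ := ⨆ i, ‖a i‖

/-- Coefficients of `f - f(0)`. -/
def tail (a : ℕ → K) : ℕ → K := fun i => if i = 0 then 0 else a i

/-- SP power series: `a 1 ≠ 0` and `a j ∈ a 1 • M_K` for all `j > 1`;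
`‖a 1‖` is then the SP-norm `|f|_SP`. -/
def IsSP (a : ℕ → K) : Prop := a 1 ≠ 0 ∧ ∀ j, 1 < j → ‖a j‖ < ‖a 1‖

/-- Coefficients of `f_{b,c}(t) = (1/c) ⬝ f (b + c t)`. -/
noncomputable def shiftCoeff (a : ℕ → K) (b c : K) : ℕ → K :=
  fun j => c⁻¹ * c ^ j * ∑' m : ℕ, ((m + j).choose j : K) * a (m + j) * b ^ m

/-- `SPAt q a r` says: for all nonzero `c ∈ M_K ^ r` and all `b ∈ O_K`, the power series
`f_{b,c}` is SP.  (Here `c ∈ M_K ^ r` iff `‖c‖ ≤ q⁻¹ ^ r`.)  The SP-number of `f` is the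
least `r` with this property, i.e. `IsLeast {r | SPAt q a r} r`. -/
def SPAt (q : ℕ) (a : ℕ → K) (r : ℕ) : Prop :=
  ∀ b c : K, ‖b‖ ≤ 1 → c ≠ 0 → ‖c‖ ≤ (q : ℝ)⁻¹ ^ r → IsSP (shiftCoeff a b c)

/-- Coefficients of the derivative of a power series; `dcoeff^[k] a` gives `f^{(k)}`. -/
def dcoeff (a : ℕ → K) : ℕ → K := fun j => ((j + 1 : ℕ) : K) * a (j + 1)

/-- `K` is a non-archimedean local field whose residue field has `q` elements, the norm
being normalized so that a uniformizer `π_K` has norm `q⁻¹`. -/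
structure IsLocalField (K : Type*) [NontriviallyNormedField K] (q : ℕ) : Prop where
  nonarch : IsNonarchimedean (norm : K → ℝ)
  one_lt : 1 < q
  complete : CompleteSpace K
  exists_unif : ∃ π : K, ‖π‖ = (q : ℝ)⁻¹
  discrete : ∀ x : K, x ≠ 0 → ∃ m : ℤ, ‖x‖ = (q : ℝ) ^ m
  residue : ∃ T : Finset K, T.card = q ∧ (∀ t ∈ T, ‖t‖ ≤ 1) ∧
      ∀ x : K, ‖x‖ ≤ 1 → ∃! t, t ∈ T ∧ ‖x - t‖ < 1

/-- `ψ` is an additive character on `K`, trivial on `M_K` and nontrivial on `O_K`. -/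
structure IsAddChar (ψ : K → ℂ) : Prop where
  cont : Continuous ψ
  map_add : ∀ x y, ψ (x + y) = ψ x * ψ y
  norm_eq : ∀ x, ‖ψ x‖ = 1
  triv : ∀ x : K, ‖x‖ < 1 → ψ x = 1
  nontriv : ∃ x : K, ‖x‖ ≤ 1 ∧ ψ x ≠ 1

/-- The characteristic of `K` is zero or larger than `k`. -/
def CharCond (K : Type*) [NontriviallyNormedField K] (k : ℕ) : Prop :=
  ∀ m : ℕ, m ≤ k → (m : K) = 0 → m = 0

/-- `p` is the residue characteristic of `K` (so `q = p ^ f` is the residue cardinality)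
and `e = ord (p_K)` is the ramification degree of `K`, i.e. `‖p‖ = q ^ (-e)`. -/
def IsResidueData (K : Type*) [NontriviallyNormedField K] (q p e : ℕ) : Prop :=
  p.Prime ∧ (∃ f : ℕ, 0 < f ∧ q = p ^ f) ∧ 0 < e ∧ ‖(p : K)‖ = (q : ℝ)⁻¹ ^ e

/-- `f` is (Weierstrass) regular of degree `d`: it lies in `O_K⦃x⦄` and is congruent to
a monic polynomial of degree `d` modulo `π_K ⬝ O_K⦃x⦄`. -/
def IsRegularOfDeg (a : ℕ → K) (d : ℕ) : Prop :=
  (∀ i, ‖a i‖ ≤ 1) ∧ ‖a d - 1‖ < 1 ∧ ∀ i, d < i → ‖a i‖ < 1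

/-! ### Several variables -/

/-- Evaluation of a power series in `n` variables at a point. -/
noncomputable def mpseval {n : ℕ} (a : (Fin n → ℕ) → K) (x : Fin n → K) : K :=
  ∑' i : Fin n → ℕ, a i * ∏ j, x j ^ i j

/-- Membership in `K⦃x_1,…,x_n⦄`: `‖a i‖ → 0` as `|i| → ∞`. -/
def MIsConvergent {n : ℕ} (a : (Fin n → ℕ) → K) : Prop :=
  Tendsto (fun i => ‖a i‖) cofinite (nhds 0)

/-- Gauss norm of a multivariate power series. -/
noncomputable def mgauss {n : ℕ} (a : (Fin n → ℕ) → K) : ℝ := ⨆ i, ‖a i‖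

/-- Coefficients of `f - f(0)`. -/
def mtail {n : ℕ} (a : (Fin n → ℕ) → K) : (Fin n → ℕ) → K :=
  fun i => if i = 0 then 0 else a i

/-- Coefficients of the partial derivative `∂^α f` of a multivariate power series `f`. -/
noncomputable def mpderiv {n : ℕ} (a : (Fin n → ℕ) → K) (α : Fin n → ℕ) :
    (Fin n → ℕ) → K :=
  fun i => ((∏ j, (i j + α j).descFactorial (α j) : ℕ) : K) * a (fun j => i j + α j)

/-- The unit polydisc `O_K ^ n`. -/
def polydisc (K : Type*) [NontriviallyNormedField K] (n : ℕ) : Set (Fin n → K) :=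
  {x | ∀ i, ‖x i‖ ≤ 1}

/-! ### `K`-analytic manifolds with isometric charts, type conditions, induced measures -/

/-- An isometric analytic chart of the `d`-dimensional manifold `M ⊆ K^n` centered at
`x0 ∈ M`: `ι` selects the `d` coordinates of the coordinate projection `p : x ↦ x ∘ ι`,
and the inverse of `p` is given by the `n` convergent power series `F i`, parametrizing
`M ∩ {x : ‖x - x0‖ ≤ ‖c‖}` isometrically by the polydisc `x0 + (c O_K)^d`. -/
def IsChartAt {n : ℕ} (d : ℕ) (M : Set (Fin n → K)) (x0 : Fin n → K)
    (ι : Fin d → Fin n) (c : K) (F : Fin n → (Fin d → ℕ) → K) : Prop :=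
  Function.Injective ι ∧ c ≠ 0 ∧ (∀ i, MIsConvergent (F i)) ∧
  (∀ i, mpseval (F i) 0 = x0 i) ∧
  (∀ z : Fin d → K, z ∈ polydisc K d → ∀ j, mpseval (F (ι j)) z = x0 (ι j) + c * z j) ∧
  (∀ z z' : Fin d → K, z ∈ polydisc K d → z' ∈ polydisc K d →
      ∀ i, ‖mpseval (F i) z - mpseval (F i) z'‖ ≤ ‖c‖ * (⨆ j, ‖z j - z' j‖)) ∧
  ((fun z : Fin d → K => fun i => mpseval (F i) z) '' polydisc K d
      = M ∩ {x | ∀ i, ‖x i - x0 i‖ ≤ ‖c‖})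

/-- `M ⊆ K^n` is a `d`-dimensional `K`-analytic manifold (with isometric charts). -/
def IsManifold {n : ℕ} (d : ℕ) (M : Set (Fin n → K)) : Prop :=
  ∀ x0 ∈ M, ∃ ι c F, IsChartAt d M x0 ι c F

/-- `M` is of type at most `k` at the point `x0`: for some analytic chart `f = (F i)_i`
centered at `x0` and each nonzero `v ∈ K^n` there is a multi-index `α` with
`0 < |α| ≤ k` and `v ⬝ (∂^α f)(x0) ≠ 0`. -/
def TypeAtMost {n : ℕ} (d : ℕ) (M : Set (Fin n → K)) (x0 : Fin n → K) (k : ℕ) : Prop :=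
  ∃ ι c F, IsChartAt d M x0 ι c F ∧
    ∀ v : Fin n → K, v ≠ 0 → ∃ α : Fin d → ℕ, 0 < (∑ j, α j) ∧ (∑ j, α j) ≤ k ∧
      (∑ i, v i * mpseval (mpderiv (F i) α) 0) ≠ 0

/-- `M` is of type `k`: of type at most `k` at each of its points, `k` least such. -/
def IsOfType {n : ℕ} (d : ℕ) (M : Set (Fin n → K)) (k : ℕ) : Prop :=
  0 < k ∧ (∀ x ∈ M, TypeAtMost d M x k) ∧
    ∀ k', (∀ x ∈ M, TypeAtMost d M x k') → k ≤ k'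

/-- `μS` is the measure on the manifold `S ⊆ K^n` induced, via the isometric charts
of `S` (namely the coordinate projections `x ↦ x ∘ ι`), from the Haar measure `lamd` on
`K^d` normalized so that `O_K^d` has measure `1`. -/
def IsInducedMeasure [MeasurableSpace K] {n : ℕ} (d : ℕ) (S : Set (Fin n → K))
    (μS : Measure (Fin n → K)) (lamd : Measure (Fin d → K)) : Prop :=
  μS {x | x ∉ S} = 0 ∧
  ∀ x0 ∈ S, ∀ ι c F, IsChartAt d S x0 ι c F →
    ∀ A : Set (Fin n → K), MeasurableSet A → A ⊆ S ∩ {x | ∀ i, ‖x i - x0 i‖ ≤ ‖c‖} →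
      μS A = lamd ((fun x : Fin n → K => x ∘ ι) '' A)

/-! ### Maximal function and Riesz kernel on `K^n` -/

/-- The Hardy–Littlewood maximal function on `K^n`, where the balls are the sets
`a + b ⬝ O_K^n` with `b ≠ 0`. -/
noncomputable def maximalFn [MeasurableSpace K] {n : ℕ} (μ : Measure (Fin n → K))
    (f : (Fin n → K) → ℂ) (x : Fin n → K) : ℝ :=
  sSup {r : ℝ | ∃ (a : Fin n → K) (b : K), b ≠ 0 ∧ (∀ i, ‖x i - a i‖ ≤ ‖b‖) ∧
    r = (μ {y | ∀ i, ‖y i - a i‖ ≤ ‖b‖}).toReal⁻¹ *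
      ∫ y in {y : Fin n → K | ∀ i, ‖y i - a i‖ ≤ ‖b‖}, ‖f y‖ ∂μ}

/-- The kernel `y ↦ |y|^{-γ}` on `K^n`, extended by `0` at `0`. -/
noncomputable def rieszKernel {n : ℕ} (γ : ℝ) (y : Fin n → K) : ℂ :=
  if y = 0 then 0 else ((‖y‖ ^ (-γ) : ℝ) : ℂ)

end VdC

/-! For `x, y ∈ O_K` the difference `f(x) - f(y) - a₁(x - y) = Σ_{i ≥ 2} aᵢ (xⁱ - yⁱ)` has norm
at most `C ‖x - y‖`, where `C = sup_{i ≥ 2} ‖aᵢ‖ < ‖a₁‖` (the supremum is attained since `aᵢ → 0`,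
and `‖xⁱ - yⁱ‖ ≤ ‖x - y‖` on `O_K`). Hence `‖f(x) - f(y)‖ = ‖a₁‖ ‖x - y‖`, which gives (1), and
also (3) because `‖f(x) - f(e)‖ ≤ max ‖f(x)‖ ‖f(e)‖ = ‖f(x)‖`. If `‖a₀‖ ≤ ‖a₁‖`, then
`x ↦ x - f(x) / a₁` maps `O_K` into itself and is a contraction with factor `C / ‖a₁‖`, so its
fixed point is a root of `f`. So without roots `‖f(x) - a₀‖ ≤ ‖a₁‖ < ‖a₀‖`, which gives (2). -/

theorem exists_lt_forall_le_of_tendsto_zero {u : ℕ → ℝ} (hu : Tendsto u atTop (nhds 0))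
    {r : ℝ} (hr : 0 < r) (h : ∀ j, u j < r) : ∃ C < r, ∀ j, u j ≤ C := by
  obtain ⟨N, hN⟩ := eventually_atTop.1 (hu.eventually (gt_mem_nhds (half_pos hr)))
  refine ⟨max (r / 2) ((Finset.range (N + 1)).sup' Finset.nonempty_range_add_one u),
    max_lt (half_lt_self hr) (Finset.sup'_lt_iff _ |>.2 fun j _ => h j), fun j => ?_⟩
  rcases le_or_gt N j with hj | hj
  · exact le_max_of_le_left (hN j hj).le
  · exact le_max_of_le_right (Finset.le_sup' u (Finset.mem_range.2 (by omega)))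

theorem IsUltrametricDist.norm_pow_sub_pow_le {R : Type*} [NormedCommRing R] [NormOneClass R]
    [IsUltrametricDist R] {x y : R} (hx : ‖x‖ ≤ 1) (hy : ‖y‖ ≤ 1) (n : ℕ) :
    ‖x ^ n - y ^ n‖ ≤ ‖x - y‖ := by
  have hsum : ‖∑ m ∈ Finset.range n, x ^ m * y ^ (n - 1 - m)‖ ≤ 1 :=
    IsUltrametricDist.norm_sum_le_of_forall_le_of_nonneg zero_le_one fun m _ =>
      (norm_mul_le _ _).trans <|
        mul_le_one₀ ((_root_.norm_pow_le _ _).trans (pow_le_one₀ (norm_nonneg _) hx))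
          (norm_nonneg _) ((_root_.norm_pow_le _ _).trans (pow_le_one₀ (norm_nonneg _) hy))
  rw [← geom_sum₂_mul]
  exact (norm_mul_le _ _).trans
    (by simpa using mul_le_mul_of_nonneg_right hsum (norm_nonneg (x - y)))

theorem IsUltrametricDist.norm_sub_le_max {E : Type*} [SeminormedAddGroup E]
    [IsUltrametricDist E] (x y : E) : ‖x - y‖ ≤ max ‖x‖ ‖y‖ := by
  simpa [sub_eq_add_neg] using norm_add_le_max x (-y)

namespace VdC

variable {K : Type*} [NontriviallyNormedField K] {a : ℕ → K}

theorem pseval_zero : pseval a 0 = a 0 := by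
  rw [pseval, tsum_eq_single 0 fun i hi => by simp [hi]]
  simp

theorem IsSP.exists_lt_forall_le (hsp : IsSP a) (ha : IsConvergent a) :
    ∃ C < ‖a 1‖, ∀ j, ‖a (j + 2)‖ ≤ C :=
  exists_lt_forall_le_of_tendsto_zero ((tendsto_add_atTop_iff_nat 2).2 ha)
    (norm_pos_iff.2 hsp.1) fun j => hsp.2 (j + 2) (by omega)

variable [IsUltrametricDist K] [CompleteSpace K]

theorem IsConvergent.summable (ha : IsConvergent a) {x : K} (hx : ‖x‖ ≤ 1) :
    Summable fun i => a i * x ^ i := by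
  refine NonarchimedeanAddGroup.summable_of_tendsto_cofinite_zero ?_
  rw [Nat.cofinite_eq_atTop, tendsto_zero_iff_norm_tendsto_zero]
  refine squeeze_zero (fun i => norm_nonneg _) (fun i => ?_) ha
  rw [norm_mul, norm_pow]
  exact mul_le_of_le_one_right (norm_nonneg _) (pow_le_one₀ (norm_nonneg _) hx)

theorem IsConvergent.pseval_eq (ha : IsConvergent a) {x : K} (hx : ‖x‖ ≤ 1) :
    pseval a x = a 0 + a 1 * x + ∑' i, a (i + 2) * x ^ (i + 2) := by
  rw [pseval, ← (ha.summable hx).sum_add_tsum_nat_add 2]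
  simp [Finset.sum_range_succ]

theorem IsConvergent.norm_pseval_sub_sub_le (ha : IsConvergent a) {C : ℝ}
    (hC : ∀ j, ‖a (j + 2)‖ ≤ C) {x y : K} (hx : ‖x‖ ≤ 1) (hy : ‖y‖ ≤ 1) :
    ‖pseval a x - pseval a y - a 1 * (x - y)‖ ≤ C * ‖x - y‖ := by
  have hsplit : pseval a x - pseval a y - a 1 * (x - y) =
      ∑' i, a (i + 2) * (x ^ (i + 2) - y ^ (i + 2)) := by
    simp only [ha.pseval_eq hx, ha.pseval_eq hy, mul_sub]
    rw [((summable_nat_add_iff 2).2 (ha.summable hx)).tsum_sub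
      ((summable_nat_add_iff 2).2 (ha.summable hy))]
    ring
  rw [hsplit]
  refine IsUltrametricDist.norm_tsum_le_of_forall_le_of_nonneg
    (mul_nonneg ((norm_nonneg _).trans (hC 0)) (norm_nonneg _)) fun i => ?_
  rw [norm_mul]
  exact mul_le_mul (hC i) (IsUltrametricDist.norm_pow_sub_pow_le hx hy _) (norm_nonneg _)
    ((norm_nonneg _).trans (hC 0))

theorem IsSP.norm_pseval_sub (hsp : IsSP a) (ha : IsConvergent a) {x y : K} (hx : ‖x‖ ≤ 1)
    (hy : ‖y‖ ≤ 1) : ‖pseval a x - pseval a y‖ = ‖a 1‖ * ‖x - y‖ := by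
  rcases eq_or_ne x y with rfl | hxy
  · simp
  obtain ⟨C, hC1, hC⟩ := hsp.exists_lt_forall_le ha
  have hlt : ‖pseval a x - pseval a y - a 1 * (x - y)‖ < ‖a 1 * (x - y)‖ := by
    rw [norm_mul]
    exact (ha.norm_pseval_sub_sub_le hC hx hy).trans_lt
      (mul_lt_mul_of_pos_right hC1 (norm_pos_iff.2 (sub_ne_zero.2 hxy)))
  rw [← norm_mul, ← add_sub_cancel (a 1 * (x - y)) (pseval a x - pseval a y),
    IsUltrametricDist.norm_add_eq_max_of_norm_ne_norm hlt.ne', max_eq_left hlt.le]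

theorem IsSP.norm_pseval_sub_coeff_zero_le (hsp : IsSP a) (ha : IsConvergent a) {x : K}
    (hx : ‖x‖ ≤ 1) : ‖pseval a x - a 0‖ ≤ ‖a 1‖ := by
  have h := hsp.norm_pseval_sub ha hx (norm_zero.trans_le zero_le_one)
  rw [pseval_zero, sub_zero] at h
  rw [h]
  exact mul_le_of_le_one_right (norm_nonneg _) hx

theorem IsSP.exists_pseval_eq_zero (hsp : IsSP a) (ha : IsConvergent a) (h0 : ‖a 0‖ ≤ ‖a 1‖) :
    ∃ d : K, ‖d‖ ≤ 1 ∧ pseval a d = 0 := by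
  obtain ⟨C, hC1, hC⟩ := hsp.exists_lt_forall_le ha
  have ha1 : 0 < ‖a 1‖ := norm_pos_iff.2 hsp.1
  have hC0 : 0 ≤ C := (norm_nonneg _).trans (hC 0)
  set T : K → K := fun x => x - pseval a x / a 1 with hT
  have hmaps : Set.MapsTo T (Metric.closedBall 0 1) (Metric.closedBall 0 1) := by
    intro x hx
    rw [mem_closedBall_zero_iff] at hx ⊢
    have hfx : ‖pseval a x‖ ≤ ‖a 1‖ := by
      rw [← sub_add_cancel (pseval a x) (a 0)]
      exact (IsUltrametricDist.norm_add_le_max _ _).trans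
        (max_le (hsp.norm_pseval_sub_coeff_zero_le ha hx) h0)
    refine (IsUltrametricDist.norm_sub_le_max _ _).trans (max_le hx ?_)
    rwa [norm_div, div_le_one ha1]
  have hcontr : ContractingWith ⟨C / ‖a 1‖, div_nonneg hC0 ha1.le⟩ (hmaps.restrict T _ _) := by
    refine ⟨(div_lt_one ha1).2 hC1, LipschitzWith.of_dist_le_mul fun x y => ?_⟩
    have hTxy : T x - T y = -(pseval a x - pseval a y - a 1 * (x - y)) / a 1 := by
      simp only [hT]
      field_simp [hsp.1]
      ring
    rw [Subtype.dist_eq, Subtype.dist_eq, dist_eq_norm, dist_eq_norm,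
      Set.MapsTo.val_restrict_apply, Set.MapsTo.val_restrict_apply, hTxy, norm_div, norm_neg]
    change _ ≤ C / ‖a 1‖ * _
    rw [div_mul_eq_mul_div, div_le_div_iff_of_pos_right ha1]
    exact ha.norm_pseval_sub_sub_le hC (mem_closedBall_zero_iff.1 x.2)
      (mem_closedBall_zero_iff.1 y.2)
  obtain ⟨d, hd, hTd, -⟩ := hcontr.exists_fixedPoint' Metric.isClosed_closedBall.isComplete hmaps
    (Metric.mem_closedBall_self zero_le_one) (edist_ne_top _ _)
  refine ⟨d, mem_closedBall_zero_iff.1 hd, ?_⟩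
  simpa [hsp.1] using sub_eq_self.1 hTd

theorem IsSP.norm_pseval_eq_of_lt (hsp : IsSP a) (ha : IsConvergent a) (h01 : ‖a 1‖ < ‖a 0‖)
    {x : K} (hx : ‖x‖ ≤ 1) : ‖pseval a x‖ = ‖a 0‖ := by
  have hlt : ‖pseval a x - a 0‖ < ‖a 0‖ := (hsp.norm_pseval_sub_coeff_zero_le ha hx).trans_lt h01
  rw [← sub_add_cancel (pseval a x) (a 0),
    IsUltrametricDist.norm_add_eq_max_of_norm_ne_norm hlt.ne, max_eq_right hlt.le]

end VdC

open VdC in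
/-- Lemma 2.9.  Let `f = Σ aᵢ xⁱ ∈ K⦃x⦄` be SP.  (1) If `f(d) = 0` for
some `d ∈ O_K` then `|f(x)| = |f|_SP ⬝ |x - d|` on `O_K`.  (2) If there is no such `d`,
then `|f(x)| = |a₀| > |f|_SP` on `O_K`.  (3) If `|f(e)|` is minimal among the `|f(x)|`,
`x ∈ O_K`, then `|f(x)| ≥ |f|_SP ⬝ |x - e|` on `O_K`. -/
theorem statement2 {K : Type*} [NontriviallyNormedField K] (q : ℕ)
    (hK : IsLocalField K q) (a : ℕ → K) (ha : IsConvergent a) (hsp : IsSP a) :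
    (∀ d : K, ‖d‖ ≤ 1 → pseval a d = 0 →
        ∀ x : K, ‖x‖ ≤ 1 → ‖pseval a x‖ = ‖a 1‖ * ‖x - d‖) ∧
    ((¬ ∃ d : K, ‖d‖ ≤ 1 ∧ pseval a d = 0) →
        ‖a 1‖ < ‖a 0‖ ∧ ∀ x : K, ‖x‖ ≤ 1 → ‖pseval a x‖ = ‖a 0‖) ∧
    (∀ e : K, ‖e‖ ≤ 1 → (∀ x : K, ‖x‖ ≤ 1 → ‖pseval a e‖ ≤ ‖pseval a x‖) →
        ∀ x : K, ‖x‖ ≤ 1 → ‖a 1‖ * ‖x - e‖ ≤ ‖pseval a x‖) := by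
  have := IsUltrametricDist.isUltrametricDist_of_isNonarchimedean_norm hK.nonarch
  have := hK.complete
  refine ⟨fun d hd hfd x hx => ?_, fun hno => ?_, fun e he hmin x hx => ?_⟩
  · simpa [hfd] using hsp.norm_pseval_sub ha hx hd
  · have h01 : ‖a 1‖ < ‖a 0‖ := lt_of_not_ge fun h => hno (hsp.exists_pseval_eq_zero ha h)
    exact ⟨h01, fun x hx => hsp.norm_pseval_eq_of_lt ha h01 hx⟩
  · rw [← hsp.norm_pseval_sub ha hx he]
    exact (IsUltrametricDist.norm_sub_le_max _ _).trans (max_le le_rfl (hmin x hx))
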